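/- Under the hypotheses of the complete intersection theorem (four distinct A_i ∈ ℙ^1∖(Δ_0∪W)), the ab lines P_i^A ⋆ Q_j^A ⋆ L^A, for i ∈ I(a) and j ∈ I(b), are pairwise distinct lines of ℙ^3. -/

import Mathlib

/-- The point P_i^A ⋆ Q_j^A ∈ ℙ³ (affine representative). -/
noncomputable def PQvec (α β : Fin 4 → ℂ) (i j : ℕ) : Fin 4 → ℂ :=
  fun t => ((α t + (i : ℂ) * β t) * ((j : ℂ) * α t + β t)) / (α t * β t)

/-- The cone over the line L^A: solutions of Σ α_t x_t = 0 = Σ β_t x_t. -/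
def LAset (α β : Fin 4 → ℂ) : Set (Fin 4 → ℂ) :=
  {x | (∑ t, α t * x t) = 0 ∧ (∑ t, β t * x t) = 0}

/-- The line P_i^A ⋆ Q_j^A ⋆ L^A, as a subset of ℙ³. -/
def lineIJ (α β : Fin 4 → ℂ) (i j : ℕ) : Set (Projectivization ℂ (Fin 4 → ℂ)) :=
  {z | ∃ x ∈ LAset α β, ∃ h : (fun t => PQvec α β i j t * x t) ≠ 0,
    z = Projectivization.mk ℂ (fun t => PQvec α β i j t * x t) h}

/-!
If the lines for `(i, j)` and `(k, l)` coincide, the coordinatewise quotient `e` of the points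
`P_i ⋆ Q_j` and `P_k ⋆ Q_l` maps the plane over `L^A` into itself. As all `2 × 2` minors of
`(α, β)` are nonzero, this plane contains vectors supported on any three coordinates, which forces
`e` to be a scalar `p`. Then the binary quadratic forms `(X + iY)(jX + Y)` and
`p (X + kY)(lX + Y)` agree at three distinct points `(α_t : β_t)` of `ℙ¹`, hence coincide:
`i = pk`, `j = pl`, `1 + ij = p (1 + kl)`. So `(1 - p)(1 - pkl) = 0`, and either `p = 1` or
`ijkl = 1`; both give `(i, j) = (k, l)`.
-/

section Algebra

variable {K : Type*} [Field K]

lemma binary_quadratic_eq_zero_of_three_roots {A B C x₀ y₀ x₁ y₁ x₂ y₂ : K}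
    (h₀₁ : x₀ * y₁ ≠ x₁ * y₀) (h₀₂ : x₀ * y₂ ≠ x₂ * y₀) (h₁₂ : x₁ * y₂ ≠ x₂ * y₁)
    (hQ₀ : A * x₀ ^ 2 + B * (x₀ * y₀) + C * y₀ ^ 2 = 0)
    (hQ₁ : A * x₁ ^ 2 + B * (x₁ * y₁) + C * y₁ ^ 2 = 0)
    (hQ₂ : A * x₂ ^ 2 + B * (x₂ * y₂) + C * y₂ ^ 2 = 0) :
    A = 0 ∧ B = 0 ∧ C = 0 := by
  have hdet : (x₀ * y₁ - x₁ * y₀) * (x₀ * y₂ - x₂ * y₀) * (x₁ * y₂ - x₂ * y₁) ≠ 0 := by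
    simp only [ne_eq, mul_eq_zero, sub_eq_zero, not_or]
    exact ⟨⟨h₀₁, h₀₂⟩, h₁₂⟩
  -- Cramer's rule: the determinant of the rows `(x², xy, y²)` is the product of the minors
  refine ⟨(mul_eq_zero.mp ?_).resolve_right hdet, (mul_eq_zero.mp ?_).resolve_right hdet,
    (mul_eq_zero.mp ?_).resolve_right hdet⟩
  · linear_combination (y₁ * y₂ * (x₁ * y₂ - x₂ * y₁)) * hQ₀
      - (y₀ * y₂ * (x₀ * y₂ - x₂ * y₀)) * hQ₁ + (y₀ * y₁ * (x₀ * y₁ - x₁ * y₀)) * hQ₂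
  · linear_combination (-(x₁ * y₂ - x₂ * y₁) * (x₁ * y₂ + x₂ * y₁)) * hQ₀
      + ((x₀ * y₂ - x₂ * y₀) * (x₀ * y₂ + x₂ * y₀)) * hQ₁
      - ((x₀ * y₁ - x₁ * y₀) * (x₀ * y₁ + x₁ * y₀)) * hQ₂
  · linear_combination (x₁ * x₂ * (x₁ * y₂ - x₂ * y₁)) * hQ₀
      - (x₀ * x₂ * (x₀ * y₂ - x₂ * y₀)) * hQ₁ + (x₀ * x₁ * (x₀ * y₁ - x₁ * y₀)) * hQ₂

lemma eq_and_eq_of_proportional [CharZero K] {i j k l : ℕ} {p : K}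
    (hi : (i : K) = p * k) (hj : (j : K) = p * l) (hij : 1 + (i : K) * j = p * (1 + k * l)) :
    i = k ∧ j = l := by
  have hfactor : (1 - p) * (1 - p * (k * l)) = 0 := by
    linear_combination hij - (j : K) * hi - p * k * hj
  rcases mul_eq_zero.mp hfactor with hp | hp
  · obtain rfl : p = 1 := (sub_eq_zero.mp hp).symm
    exact ⟨by exact_mod_cast hi.trans (one_mul _), by exact_mod_cast hj.trans (one_mul _)⟩
  · have hprod : ((i * j * (k * l) : ℕ) : K) = 1 := by
      push_cast
      linear_combination (k * l * j) * hi + (k * l * p * k) * hj - (1 + p * (k * l)) * hp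
    obtain ⟨⟨hi₁, hj₁⟩, hk₁, hl₁⟩ := by simpa only [Nat.cast_eq_one, mul_eq_one] using hprod
    exact ⟨hi₁.trans hk₁.symm, hj₁.trans hl₁.symm⟩

end Algebra

section LinesInP3

variable {α β : Fin 4 → ℂ}

lemma smul_mem_LAset {y : Fin 4 → ℂ} (u : ℂ) (hy : y ∈ LAset α β) : u • y ∈ LAset α β := by
  obtain ⟨hy₁, hy₂⟩ := hy
  constructor
  · simp only [Pi.smul_apply, smul_eq_mul, mul_left_comm _ u, ← Finset.mul_sum, hy₁, mul_zero]
  · simp only [Pi.smul_apply, smul_eq_mul, mul_left_comm _ u, ← Finset.mul_sum, hy₂, mul_zero]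

lemma PQvec_ne_zero (hα : ∀ t, α t ≠ 0) (hβ : ∀ t, β t ≠ 0)
    (hW : ∀ t, ∀ m : ℕ, 1 ≤ m → β t ≠ -(m : ℂ) * α t ∧ (m : ℂ) * β t ≠ -α t)
    (i j : ℕ) (t : Fin 4) : PQvec α β i j t ≠ 0 := by
  refine div_ne_zero (mul_ne_zero ?_ ?_) (mul_ne_zero (hα t) (hβ t))
  · rcases Nat.eq_zero_or_pos i with rfl | hi
    · simpa using hα t
    · exact fun h => (hW t i hi).2 (by linear_combination h)
  · rcases Nat.eq_zero_or_pos j with rfl | hj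
    · simpa using hβ t
    · exact fun h => (hW t j hj).1 (by linear_combination h)

lemma div_mul_mem_LAset_of_lineIJ_eq {i j k l : ℕ} (hd : ∀ t, PQvec α β k l t ≠ 0)
    (h : lineIJ α β i j = lineIJ α β k l) {x : Fin 4 → ℂ} (hx : x ∈ LAset α β) :
    PQvec α β i j / PQvec α β k l * x ∈ LAset α β := by
  by_cases hcx : (fun t => PQvec α β i j t * x t) = 0
  · have hzero : PQvec α β i j / PQvec α β k l * x = 0 := by
      funext t
      simp [div_mul_eq_mul_div, congrFun hcx t]
    rw [hzero]
    simpa using smul_mem_LAset 0 hx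
  obtain ⟨y, hy, _, hmk⟩ : Projectivization.mk ℂ _ hcx ∈ lineIJ α β k l := h ▸ ⟨x, hx, hcx, rfl⟩
  obtain ⟨u, hu⟩ := (Projectivization.mk_eq_mk_iff _ _ _ _ _).mp hmk
  convert smul_mem_LAset (u : ℂ) hy using 1
  funext t
  have hut := congrFun hu t
  simp only [Units.smul_def, Pi.smul_apply, smul_eq_mul] at hut
  simp only [Pi.mul_apply, Pi.div_apply, Pi.smul_apply, smul_eq_mul]
  field_simp [hd t]
  linear_combination -hut

lemma apply_eq_apply_zero_of_mul_mem_LAset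
    (hdist : ∀ t s : Fin 4, t ≠ s → α t * β s ≠ α s * β t) {e : Fin 4 → ℂ}
    (he : ∀ x ∈ LAset α β, e * x ∈ LAset α β) (t : Fin 4) : e t = e 0 := by
  set m : Fin 4 → Fin 4 → ℂ := fun t s => α t * β s - α s * β t with hm
  have hm0 : ∀ t s, t ≠ s → m t s ≠ 0 := fun t s h => sub_ne_zero.mpr (hdist t s h)
  -- vectors of the plane supported on the coordinates `{0, 1, 2}` and `{1, 2, 3}`
  have hv : ![m 1 2, -m 0 2, m 0 1, 0] ∈ LAset α β := by
    constructor <;> simp only [hm, Fin.sum_univ_four, Matrix.cons_val] <;> ring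
  have hw : ![0, m 2 3, -m 1 3, m 1 2] ∈ LAset α β := by
    constructor <;> simp only [hm, Fin.sum_univ_four, Matrix.cons_val] <;> ring
  obtain ⟨hv₁, hv₂⟩ := he _ hv
  obtain ⟨hw₁, hw₂⟩ := he _ hw
  simp only [Fin.sum_univ_four, Pi.mul_apply, Matrix.cons_val] at hv₁ hv₂ hw₁ hw₂
  have h01 : m 0 2 * m 1 2 * (e 1 - e 0) = 0 := by
    simp only [hm]; linear_combination α 2 * hv₂ - β 2 * hv₁
  have h02 : m 0 1 * m 1 2 * (e 2 - e 0) = 0 := by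
    simp only [hm]; linear_combination α 1 * hv₂ - β 1 * hv₁
  have h13 : m 1 2 * m 2 3 * (e 3 - e 1) = 0 := by
    simp only [hm]; linear_combination α 2 * hw₂ - β 2 * hw₁
  have e10 := sub_eq_zero.mp ((mul_eq_zero.mp h01).resolve_left
    (mul_ne_zero (hm0 0 2 (by decide)) (hm0 1 2 (by decide))))
  have e20 := sub_eq_zero.mp ((mul_eq_zero.mp h02).resolve_left
    (mul_ne_zero (hm0 0 1 (by decide)) (hm0 1 2 (by decide))))
  have e31 := sub_eq_zero.mp ((mul_eq_zero.mp h13).resolve_left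
    (mul_ne_zero (hm0 1 2 (by decide)) (hm0 2 3 (by decide))))
  fin_cases t
  exacts [rfl, e10, e20, e31.trans e10]

lemma quadratic_eq_zero_of_PQvec_eq_mul {i j k l : ℕ} {p : ℂ} {t : Fin 4}
    (hα : α t ≠ 0) (hβ : β t ≠ 0) (h : PQvec α β i j t = p * PQvec α β k l t) :
    ((j : ℂ) - p * l) * α t ^ 2 + ((1 + (i : ℂ) * j) - p * (1 + (k : ℂ) * l)) * (α t * β t)
      + ((i : ℂ) - p * k) * β t ^ 2 = 0 := by
  simp only [PQvec] at h
  field_simp at h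
  linear_combination h

end LinesInP3

theorem lines_pairwise_distinct_general (α β : Fin 4 → ℂ)
    (hα : ∀ t, α t ≠ 0) (hβ : ∀ t, β t ≠ 0)
    (hdist : ∀ t s : Fin 4, t ≠ s → α t * β s ≠ α s * β t)
    (hW : ∀ t, ∀ m : ℕ, 1 ≤ m → β t ≠ -(m : ℂ) * α t ∧ (m : ℂ) * β t ≠ -α t)
    (Ia Ib : Finset ℕ) :
    ∀ i ∈ Ia, ∀ k ∈ Ia, ∀ j ∈ Ib, ∀ l ∈ Ib, (i, j) ≠ (k, l) →
      lineIJ α β i j ≠ lineIJ α β k l := by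
  intro i _ k _ j _ l _ hne heq
  have hPQ := PQvec_ne_zero hα hβ hW
  have hscalar := apply_eq_apply_zero_of_mul_mem_LAset hdist
    fun x hx => div_mul_mem_LAset_of_lineIJ_eq (hPQ k l) heq hx
  have hprop (t : Fin 4) :
      PQvec α β i j t = (PQvec α β i j / PQvec α β k l) 0 * PQvec α β k l t := by
    rw [← hscalar t, Pi.div_apply, div_mul_cancel₀ _ (hPQ k l t)]
  have hQ (t : Fin 4) := quadratic_eq_zero_of_PQvec_eq_mul (hα t) (hβ t) (hprop t)
  obtain ⟨hA, hB, hC⟩ := binary_quadratic_eq_zero_of_three_roots (hdist 0 1 (by decide))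
    (hdist 0 2 (by decide)) (hdist 1 2 (by decide)) (hQ 0) (hQ 1) (hQ 2)
  obtain ⟨rfl, rfl⟩ := eq_and_eq_of_proportional (sub_eq_zero.mp hC) (sub_eq_zero.mp hA)
    (sub_eq_zero.mp hB)
  exact hne rfl

/-- the a·b lines P_i^A ⋆ Q_j^A ⋆ L^A, i ∈ I(a), j ∈ I(b), are
pairwise distinct lines of ℙ³. -/
theorem lines_pairwise_distinct (α β : Fin 4 → ℂ)
    (hα : ∀ t, α t ≠ 0) (hβ : ∀ t, β t ≠ 0)
    (hdist : ∀ t s : Fin 4, t ≠ s → α t * β s ≠ α s * β t)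
    (hW : ∀ t, ∀ m : ℕ, 1 ≤ m → β t ≠ -(m : ℂ) * α t ∧ (m : ℂ) * β t ≠ -α t)
    (a b : ℕ) (Ia Ib : Finset ℕ) (hIa : Ia.card = a) (hIb : Ib.card = b)
    (h0a : 0 ∈ Ia) (h0b : 0 ∈ Ib) :
    ∀ i ∈ Ia, ∀ k ∈ Ia, ∀ j ∈ Ib, ∀ l ∈ Ib, (i, j) ≠ (k, l) →
      lineIJ α β i j ≠ lineIJ α β k l :=
  lines_pairwise_distinct_general α β hα hβ hdist hW Ia Ib
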